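/- For programs P, Q and a set of atoms A, P ≡ˢ_A Q (strong equivalence relative to A) holds if and only if SE^A(P) = SE^A(Q), where SE^A denotes the set of relativized A-SE-models. -/

import Mathlib

structure Rule where
  head : Finset ℕ
  pos : Finset ℕ
  neg : Finset ℕ

abbrev Interp := Set ℕ
abbrev Program := Set Rule

/-- Classical satisfaction of a rule by an interpretation. -/
def Rule.satisfied (I : Interp) (r : Rule) : Prop :=
  ((↑r.pos ⊆ I) ∧ ∀ a ∈ r.neg, a ∉ I) → ∃ a ∈ r.head, a ∈ I

/-- `I` is a classical model of the program `P`. -/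
def Models (I : Interp) (P : Program) : Prop := ∀ r ∈ P, Rule.satisfied I r

/-- `X` models the Gelfond-Lifschitz reduct `P^Y`. -/
def ModelsReduct (X : Interp) (P : Program) (Y : Interp) : Prop :=
  ∀ r ∈ P, (∀ a ∈ r.neg, a ∉ Y) → (↑r.pos ⊆ X) → ∃ a ∈ r.head, a ∈ X

/-- `Y` is an answer set of `P`: a minimal model of the reduct `P^Y`. -/
def AnswerSet (P : Program) (Y : Interp) : Prop :=
  ModelsReduct Y P Y ∧ ∀ Z : Interp, Z ⊂ Y → ¬ ModelsReduct Z P Y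

/-- `(X,Y)` is an SE-model of `P`. -/
def SEModel (P : Program) (X Y : Interp) : Prop :=
  X ⊆ Y ∧ Models Y P ∧ ModelsReduct X P Y

/-- `(X,Y)` is a UE-model of `P`. -/
def UEModel (P : Program) (X Y : Interp) : Prop :=
  SEModel P X Y ∧ ∀ X', SEModel P X' Y → X ⊂ X' → X' = Y

/-- The program consisting of the atoms in `F` as facts. -/
def Facts (F : Set ℕ) : Program := { r | ∃ a ∈ F, r = ⟨{a}, ∅, ∅⟩ }

/-- Uniform equivalence of programs. -/
def UnifEquiv (P Q : Program) : Prop :=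
  ∀ F : Set ℕ, ∀ Y : Interp, AnswerSet (P ∪ Facts F) Y ↔ AnswerSet (Q ∪ Facts F) Y

/-- Strong equivalence of programs. -/
def StrongEquiv (P Q : Program) : Prop :=
  ∀ R : Program, ∀ Y : Interp, AnswerSet (P ∪ R) Y ↔ AnswerSet (Q ∪ R) Y

def Rule.atoms (r : Rule) : Finset ℕ := r.head ∪ r.pos ∪ r.neg

/-- All atoms occurring in `R` belong to `A`. -/
def ProgramOver (A : Set ℕ) (R : Program) : Prop := ∀ r ∈ R, ↑r.atoms ⊆ A

/-- Strong equivalence relative to a set of atoms `A`. -/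
def RelStrongEquiv (A : Set ℕ) (P Q : Program) : Prop :=
  ∀ R : Program, ProgramOver A R →
    ∀ Y : Interp, AnswerSet (P ∪ R) Y ↔ AnswerSet (Q ∪ R) Y

/-- Uniform equivalence relative to a set of atoms `A`. -/
def RelUnifEquiv (A : Set ℕ) (P Q : Program) : Prop :=
  ∀ F : Set ℕ, F ⊆ A →
    ∀ Y : Interp, AnswerSet (P ∪ Facts F) Y ↔ AnswerSet (Q ∪ Facts F) Y

/-- A unary rule: one head atom, no negation, at most one positive body atom. -/
def Unary (r : Rule) : Prop := r.head.card = 1 ∧ r.neg = ∅ ∧ r.pos.card ≤ 1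

/-- `(X,Y)` is a (relativized) `A`-SE-model of `P`. -/
def ASEModel (A : Set ℕ) (P : Program) (X Y : Interp) : Prop :=
  (X = Y ∨ X ⊂ Y ∩ A) ∧ Models Y P ∧
  (∀ Y' : Interp, Y' ⊂ Y → Y' ∩ A = Y ∩ A → ¬ ModelsReduct Y' P Y) ∧
  (X ⊂ Y → ∃ X' : Interp, X' ⊆ Y ∧ X' ∩ A = X ∧ ModelsReduct X' P Y)

/-- `(X,Y)` is a (relativized) `A`-UE-model of `P`. -/
def AUEModel (A : Set ℕ) (P : Program) (X Y : Interp) : Prop :=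
  ASEModel A P X Y ∧ ∀ X', ASEModel A P X' Y → X ⊂ X' → X' = Y

/-- A positive program: all rules have empty negative body. -/
def Positive (P : Program) : Prop := ∀ r ∈ P, r.neg = ∅

/-- Positive dependency: edge from a positive body atom to a head atom. -/
def Dep (P : Program) (a b : ℕ) : Prop := ∃ r ∈ P, a ∈ r.pos ∧ b ∈ r.head

/-- Head-cycle freeness: no directed cycle of the positive dependency graph
through two distinct head atoms of one rule. -/
def HCF (P : Program) : Prop :=
  ∀ r ∈ P, ∀ a ∈ r.head, ∀ b ∈ r.head, a ≠ b →
    ¬ (Relation.ReflTransGen (Dep P) a b ∧ Relation.ReflTransGen (Dep P) b a)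

/-- The shift of a single rule. -/
def Rule.shift (r : Rule) : Program :=
  if r.head = ∅ then {r}
  else { r' | ∃ a ∈ r.head, r' = ⟨{a}, r.pos, r.neg ∪ (r.head.erase a)⟩ }

/-- The shift of a program. -/
def shiftProg (P : Program) : Program := ⋃ r ∈ P, r.shift

/-- The set of SE-models of `P` as a set of pairs. -/
def SEset (P : Program) : Set (Interp × Interp) := { p | SEModel P p.1 p.2 }

/-!
Over atoms of `A`, a context `R` only sees the `A`-part of an interpretation, so `Y` is an answer
set of `P ∪ R` exactly when `(Y, Y)` is an `A`-SE-model of `P`, `Y` satisfies `R^Y`, and no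
`A`-SE-model `(X, Y)` of `P` with `X ⊂ Y ∩ A` satisfies `R^Y`. Hence equal `A`-SE-models give
relative strong equivalence. Conversely, the facts `Y ∩ A` detect the pair `(Y, Y)`, and the facts
`X` together with all rules `a ← b` over `(Y ∩ A) \ X` detect a pair `(X, Y)` with `X ⊂ Y ∩ A`,
because `X` is the only proper subset of `Y ∩ A` satisfying that context.
-/

section

variable {A : Set ℕ} {P R : Program} {X Y Z : Interp}

theorem modelsReduct_union {Q : Program} :
    ModelsReduct Z (P ∪ Q) Y ↔ ModelsReduct Z P Y ∧ ModelsReduct Z Q Y :=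
  ⟨fun h => ⟨fun r hr => h r (Or.inl hr), fun r hr => h r (Or.inr hr)⟩,
    fun ⟨hP, hQ⟩ r hr => hr.elim (hP r) (hQ r)⟩

theorem models_iff_modelsReduct_self : Models Y P ↔ ModelsReduct Y P Y :=
  ⟨fun h r hr hneg hpos => h r hr ⟨hpos, hneg⟩, fun h r hr hbody => h r hr hbody.2 hbody.1⟩

theorem ProgramOver.modelsReduct_of_inter_eq {Z' : Interp} (hR : ProgramOver A R)
    (hZ : Z ∩ A = Z' ∩ A) (h : ModelsReduct Z R Y) : ModelsReduct Z' R Y := by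
  have hmem : ∀ r ∈ R, ∀ a ∈ r.head ∪ r.pos, a ∈ Z ↔ a ∈ Z' := by
    intro r hr a ha
    have haA : a ∈ A := hR r hr (Finset.mem_coe.2 (Finset.mem_union_left _ ha))
    simpa [haA] using Set.ext_iff.mp hZ a
  intro r hr hneg hpos
  obtain ⟨a, ha, haZ⟩ :=
    h r hr hneg fun b hb => (hmem r hr b (by simp [Finset.mem_coe.mp hb])).2 (hpos hb)
  exact ⟨a, ha, (hmem r hr a (by simp [ha])).1 haZ⟩

theorem modelsReduct_facts_iff {F : Set ℕ} : ModelsReduct Z (Facts F) Y ↔ F ⊆ Z := by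
  constructor
  · intro h a ha
    obtain ⟨b, hb, hbZ⟩ := h ⟨{a}, ∅, ∅⟩ ⟨a, ha, rfl⟩ (by simp) (by simp)
    rwa [Finset.mem_singleton.mp hb] at hbZ
  · rintro h r ⟨a, ha, rfl⟩ - -
    exact ⟨a, Finset.mem_singleton_self a, h ha⟩

theorem programOver_facts {F : Set ℕ} (hF : F ⊆ A) : ProgramOver A (Facts F) := by
  rintro r ⟨a, ha, rfl⟩ x hx
  simp only [Rule.atoms, Finset.union_empty, Finset.coe_singleton,
    Set.mem_singleton_iff] at hx
  exact hx ▸ hF ha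

theorem aseModel_self_iff :
    ASEModel A P Y Y ↔ Models Y P ∧
      ∀ Y' : Interp, Y' ⊂ Y → Y' ∩ A = Y ∩ A → ¬ ModelsReduct Y' P Y :=
  ⟨fun h => ⟨h.2.1, h.2.2.1⟩, fun h => ⟨Or.inl rfl, h.1, h.2, fun hY => absurd rfl hY.ne⟩⟩

theorem ASEModel.self (h : ASEModel A P X Y) : ASEModel A P Y Y :=
  aseModel_self_iff.2 ⟨h.2.1, h.2.2.1⟩

theorem aseModel_iff_of_ssubset (hX : X ⊂ Y ∩ A) :
    ASEModel A P X Y ↔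
      ASEModel A P Y Y ∧ ∃ X' ⊆ Y, X' ∩ A = X ∧ ModelsReduct X' P Y :=
  ⟨fun h => ⟨h.self, h.2.2.2 (hX.trans_subset Set.inter_subset_left)⟩,
    fun ⟨hY, hX'⟩ => ⟨Or.inr hX, hY.2.1, hY.2.2.1, fun _ => hX'⟩⟩

theorem answerSet_union_iff (hR : ProgramOver A R) :
    AnswerSet (P ∪ R) Y ↔ ASEModel A P Y Y ∧ ModelsReduct Y R Y ∧
      ∀ X ⊂ Y ∩ A, ASEModel A P X Y → ¬ ModelsReduct X R Y := by
  simp only [AnswerSet, modelsReduct_union, aseModel_self_iff, models_iff_modelsReduct_self]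
  constructor
  · rintro ⟨⟨hYP, hYR⟩, hmin⟩
    refine ⟨⟨hYP, fun Y' hY' hA hY'P =>
      hmin Y' hY' ⟨hY'P, hR.modelsReduct_of_inter_eq hA.symm hYR⟩⟩, hYR, ?_⟩
    intro X hX hXP hXR
    obtain ⟨-, X', hX'Y, hX'A, hX'P⟩ := (aseModel_iff_of_ssubset hX).1 hXP
    have hX'R : ModelsReduct X' R Y :=
      hR.modelsReduct_of_inter_eq (by rw [← hX'A, Set.inter_assoc, Set.inter_self]) hXR
    refine hmin X' (hX'Y.ssubset_of_ne ?_) ⟨hX'P, hX'R⟩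
    rintro rfl
    exact hX.ne hX'A.symm
  · rintro ⟨⟨hYP, hmin⟩, hYR, hsep⟩
    refine ⟨⟨hYP, hYR⟩, fun Z hZ ⟨hZP, hZR⟩ => ?_⟩
    by_cases hA : Z ∩ A = Y ∩ A
    · exact hmin Z hZ hA hZP
    have hZA : Z ∩ A ⊂ Y ∩ A :=
      (Set.inter_subset_inter_left A hZ.subset).ssubset_of_ne hA
    have hZAP : ASEModel A P (Z ∩ A) Y := (aseModel_iff_of_ssubset hZA).2
      ⟨aseModel_self_iff.2 ⟨models_iff_modelsReduct_self.2 hYP, hmin⟩, Z, hZ.subset, rfl, hZP⟩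
    have hZAR : ModelsReduct (Z ∩ A) R Y :=
      hR.modelsReduct_of_inter_eq (by rw [Set.inter_assoc, Set.inter_self]) hZR
    exact hsep _ hZA hZAP hZAR

theorem answerSet_union_facts_iff : AnswerSet (P ∪ Facts (Y ∩ A)) Y ↔ ASEModel A P Y Y := by
  rw [answerSet_union_iff (programOver_facts Set.inter_subset_right)]
  simp only [modelsReduct_facts_iff]
  exact ⟨fun h => h.1, fun h => ⟨h, Set.inter_subset_left, fun _ hX _ hsub => hX.2 hsub⟩⟩

theorem ProgramOver.union {Q : Program} (hP : ProgramOver A P) (hQ : ProgramOver A Q) :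
    ProgramOver A (P ∪ Q) :=
  fun r hr => hr.elim (hP r) (hQ r)

def Implications (S : Set ℕ) : Program := { r | ∃ a ∈ S, ∃ b ∈ S, r = ⟨{a}, {b}, ∅⟩ }

theorem modelsReduct_implications_iff {S : Set ℕ} :
    ModelsReduct Z (Implications S) Y ↔ ∀ a ∈ S, ∀ b ∈ S, b ∈ Z → a ∈ Z := by
  constructor
  · intro h a ha b hb hbZ
    obtain ⟨c, hc, hcZ⟩ := h ⟨{a}, {b}, ∅⟩ ⟨a, ha, b, hb, rfl⟩ (by simp) (by simpa using hbZ)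
    rwa [Finset.mem_singleton.mp hc] at hcZ
  · rintro h r ⟨a, ha, b, hb, rfl⟩ - hpos
    exact ⟨a, Finset.mem_singleton_self a, h a ha b hb (hpos (Finset.mem_singleton_self b))⟩

theorem programOver_implications {S : Set ℕ} (hS : S ⊆ A) : ProgramOver A (Implications S) := by
  rintro r ⟨a, ha, b, hb, rfl⟩ x hx
  simp only [Rule.atoms, Finset.union_empty, Finset.coe_union, Finset.coe_singleton,
    Set.mem_union, Set.mem_singleton_iff] at hx
  rcases hx with rfl | rfl
  exacts [hS ha, hS hb]

def separator (A : Set ℕ) (X Y : Interp) : Program := Facts X ∪ Implications ((Y ∩ A) \ X)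

theorem programOver_separator (hX : X ⊆ A) : ProgramOver A (separator A X Y) :=
  (programOver_facts hX).union
    (programOver_implications (Set.sdiff_subset.trans Set.inter_subset_right))

theorem modelsReduct_separator_iff (hZ : Z ⊂ Y ∩ A) :
    ModelsReduct Z (separator A X Y) Y ↔ Z = X := by
  rw [separator, modelsReduct_union, modelsReduct_facts_iff, modelsReduct_implications_iff]
  constructor
  · rintro ⟨hXZ, himp⟩
    refine Set.Subset.antisymm (fun b hbZ => ?_) hXZ
    by_contra hbX
    refine hZ.2 fun a ha => ?_
    by_cases haX : a ∈ X
    · exact hXZ haX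
    · exact himp a ⟨ha, haX⟩ b ⟨hZ.subset hbZ, hbX⟩ hbZ
  · rintro rfl
    exact ⟨le_rfl, fun _ _ _ hb hbZ => absurd hbZ hb.2⟩

theorem aseModel_iff_not_answerSet_union_separator (hX : X ⊂ Y ∩ A) :
    ASEModel A P X Y ↔ ASEModel A P Y Y ∧ ¬ AnswerSet (P ∪ separator A X Y) Y := by
  rw [answerSet_union_iff (programOver_separator (hX.subset.trans Set.inter_subset_right))]
  have hYR : ModelsReduct Y (separator A X Y) Y :=
    modelsReduct_union.2 ⟨modelsReduct_facts_iff.2 (hX.subset.trans Set.inter_subset_left),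
      modelsReduct_implications_iff.2 fun a ha _ _ _ => ha.1.1⟩
  constructor
  · intro h
    exact ⟨h.self, fun ⟨_, _, hsep⟩ => hsep X hX h ((modelsReduct_separator_iff hX).2 rfl)⟩
  · rintro ⟨hYY, hnot⟩
    by_contra hXP
    refine hnot ⟨hYY, hYR, fun Z hZ hZP hZR => hXP ?_⟩
    rwa [(modelsReduct_separator_iff hZ).1 hZR] at hZP

end

theorem stmt11 (P Q : Program) (A : Set ℕ) :
    RelStrongEquiv A P Q ↔ ∀ X Y : Interp, ASEModel A P X Y ↔ ASEModel A Q X Y := by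
  constructor
  · intro h X Y
    have hself : ∀ Y, ASEModel A P Y Y ↔ ASEModel A Q Y Y := fun Y => by
      rw [← answerSet_union_facts_iff, ← answerSet_union_facts_iff]
      exact h _ (programOver_facts Set.inter_subset_right) Y
    obtain rfl | hXY := eq_or_ne X Y
    · exact hself X
    by_cases hX : X ⊂ Y ∩ A
    · have hsep := h (separator A X Y)
        (programOver_separator (hX.subset.trans Set.inter_subset_right)) Y
      rw [aseModel_iff_not_answerSet_union_separator hX,
        aseModel_iff_not_answerSet_union_separator hX, hself, hsep]
    · exact iff_of_false (fun hP => hX (hP.1.resolve_left hXY))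
        (fun hQ => hX (hQ.1.resolve_left hXY))
  · intro h R hR Y
    simp only [answerSet_union_iff hR, h]
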